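/- For a d-dimensional density matrix ρ with purity P(ρ) = Tr(ρ²), the von Neumann entropy satisfies S(ρ) ≤ -λ1 log λ1 - (1-λ1) log((1-λ1)/(d-1)), where λ1 = 1/d + √((d-1)/d · (P(ρ) - 1/d)). -/

import Mathlib

open scoped ComplexOrder

/-- Von Neumann entropy (base 2) of a Hermitian matrix, via its eigenvalues. -/
noncomputable def vnEntropy {n : Type*} [Fintype n] [DecidableEq n]
    {ρ : Matrix n n ℂ} (hρ : ρ.IsHermitian) : ℝ :=
  -∑ i, hρ.eigenvalues i * Real.logb 2 (hρ.eigenvalues i)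

/-- Purity Tr(ρ²) of a matrix. -/
noncomputable def purity {n : Type*} [Fintype n] (ρ : Matrix n n ℂ) : ℝ :=
  ((ρ * ρ).trace).re

/-!
Let `g` be the spectrum of `ρ` and `q = (1 - l₁) / (d - 1)`. The vector `(l₁, q, …, q)` has the
same sum and the same sum of squares as `g`, and Samuelson's inequality gives `gᵢ ≤ l₁`. On
`[0, l₁]` the function `x log x` lies above the quadratic that is tangent to it at `q` and meets it
at `l₁`, because `klFun y / (y - 1) ^ 2` is at least `1 / 2` on `[0, 1]` and decreasing on
`(1, ∞)`. Summed over a vector, that quadratic depends only on the sum and the sum of squares, so it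
takes the same value at `g` as at `(l₁, q, …, q)`, where it agrees with `x log x` entrywise. The
degenerate cases `q = 0` (pure state) and `q = l₁` (maximally mixed state) are direct.
-/

open Real Set Finset InformationTheory

lemma klFun_sub_half_sq_antitoneOn :
    AntitoneOn (fun x ↦ klFun x - (x - 1) ^ 2 / 2) (Ici 0) := by
  have hderiv (x : ℝ) (hx : x ≠ 0) :
      HasDerivAt (fun x ↦ klFun x - (x - 1) ^ 2 / 2) (log x - (x - 1)) x :=
    ((hasDerivAt_klFun hx).sub ((((hasDerivAt_id x).sub_const 1).pow 2).div_const 2)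
      ).congr_deriv (by simp)
  apply antitoneOn_of_deriv_nonpos (convex_Ici 0) (by unfold klFun; fun_prop)
  · intro x hx
    rw [interior_Ici] at hx
    exact (hderiv x hx.ne').differentiableAt.differentiableWithinAt
  · intro x hx
    rw [interior_Ici] at hx
    rw [(hderiv x hx.ne').deriv]
    linarith [log_le_sub_one_of_pos hx]

lemma half_sq_le_klFun {x : ℝ} (hx0 : 0 ≤ x) (hx1 : x ≤ 1) : (x - 1) ^ 2 / 2 ≤ klFun x := by
  have := klFun_sub_half_sq_antitoneOn (mem_Ici.2 hx0) (mem_Ici.2 zero_le_one) hx1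
  simp only [klFun_one] at this
  linarith

lemma klFun_le_half_sq {x : ℝ} (hx : 1 ≤ x) : klFun x ≤ (x - 1) ^ 2 / 2 := by
  have := klFun_sub_half_sq_antitoneOn (mem_Ici.2 zero_le_one) (mem_Ici.2 (zero_le_one.trans hx)) hx
  simp only [klFun_one] at this
  linarith

lemma two_mul_sub_one_le_add_one_mul_log {x : ℝ} (hx : 1 ≤ x) :
    2 * (x - 1) ≤ (x + 1) * log x := by
  have hderiv (y : ℝ) (hy : 0 < y) : HasDerivAt (fun x ↦ (x + 1) * log x - 2 * (x - 1))
      (log y + (y + 1) / y - 2) y :=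
    ((((hasDerivAt_id y).add_const 1).mul (hasDerivAt_log hy.ne')).sub
      (((hasDerivAt_id y).sub_const 1).const_mul 2)).congr_deriv
      (by simp only [one_mul, id_eq, mul_one, sub_left_inj, add_right_inj]; field_simp)
  have hmono : MonotoneOn (fun x ↦ (x + 1) * log x - 2 * (x - 1)) (Ici 1) := by
    apply monotoneOn_of_deriv_nonneg (convex_Ici 1)
    · exact fun y hy ↦ (hderiv y (zero_lt_one.trans_le hy)).continuousAt.continuousWithinAt
    · intro y hy
      rw [interior_Ici] at hy
      exact (hderiv y (zero_lt_one.trans hy)).differentiableAt.differentiableWithinAt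
    · intro y hy
      rw [interior_Ici] at hy
      have hy0 : 0 < y := zero_lt_one.trans hy
      rw [(hderiv y hy0).deriv, add_div, div_self hy0.ne', one_div]
      linarith [one_sub_inv_le_log_of_pos hy0]
  simpa using hmono (mem_Ici.2 le_rfl) (mem_Ici.2 hx) hx

lemma klFun_div_sq_antitoneOn : AntitoneOn (fun x ↦ klFun x / (x - 1) ^ 2) (Ioi 1) := by
  have hderiv (y : ℝ) (hy : 1 < y) : HasDerivAt (fun x ↦ klFun x / (x - 1) ^ 2)
      ((log y * (y - 1) ^ 2 - klFun y * (2 * (y - 1))) / ((y - 1) ^ 2) ^ 2) y :=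
    ((hasDerivAt_klFun (by positivity : y ≠ 0)).div
      (((hasDerivAt_id y).sub_const 1).pow 2) (by nlinarith : (y - 1) ^ 2 ≠ 0)).congr_deriv
      (by simp)
  apply antitoneOn_of_deriv_nonpos (convex_Ioi 1)
  · exact fun y hy ↦ (hderiv y hy).continuousAt.continuousWithinAt
  · intro y hy
    rw [interior_Ioi] at hy
    exact (hderiv y hy).differentiableAt.differentiableWithinAt
  · intro y hy
    rw [interior_Ioi] at hy
    rw [(hderiv y hy).deriv]
    apply div_nonpos_of_nonpos_of_nonneg _ (by positivity)
    have := two_mul_sub_one_le_add_one_mul_log hy.le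
    have hy1 : 0 < y - 1 := sub_pos.2 hy
    simp only [klFun]
    nlinarith

lemma klFun_mul_sq_le {y z : ℝ} (hz : 1 < z) (hy0 : 0 ≤ y) (hyz : y ≤ z) :
    klFun z * (y - 1) ^ 2 ≤ klFun y * (z - 1) ^ 2 := by
  rcases le_or_gt y 1 with hy1 | hy1
  · calc klFun z * (y - 1) ^ 2 ≤ (z - 1) ^ 2 / 2 * (y - 1) ^ 2 := by
          gcongr; exact klFun_le_half_sq hz.le
      _ ≤ klFun y * (z - 1) ^ 2 := by
          have := half_sq_le_klFun hy0 hy1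
          nlinarith [sq_nonneg (z - 1)]
  · have := klFun_div_sq_antitoneOn (mem_Ioi.2 hy1) (mem_Ioi.2 (hy1.trans_le hyz)) hyz
    rwa [div_le_div_iff₀ (by nlinarith) (by nlinarith)] at this

/-- `q * klFun (x / q)` is `x log x` minus its tangent line at `q`. -/
lemma mul_klFun_div {q x : ℝ} (hq : 0 < q) (hx : 0 ≤ x) :
    q * klFun (x / q) = x * log x - x * log q - x + q := by
  rcases hx.eq_or_lt with rfl | hx
  · simp [klFun_zero]
  rw [klFun, log_div hx.ne' hq.ne']
  field_simp
  ring

lemma mul_klFun_div_mul_sq_le {q l x : ℝ} (hq : 0 < q) (hql : q < l) (hx0 : 0 ≤ x)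
    (hxl : x ≤ l) : q * klFun (l / q) * (x - q) ^ 2 ≤ q * klFun (x / q) * (l - q) ^ 2 := by
  have key := klFun_mul_sq_le ((one_lt_div hq).2 hql) (div_nonneg hx0 hq.le)
    (div_le_div_of_nonneg_right hxl hq.le)
  have hx : x - q = q * (x / q - 1) := by field_simp
  have hl : l - q = q * (l / q - 1) := by field_simp
  calc q * klFun (l / q) * (x - q) ^ 2 = q ^ 3 * (klFun (l / q) * (x / q - 1) ^ 2) := by
        rw [hx]; ring
    _ ≤ q ^ 3 * (klFun (x / q) * (l / q - 1) ^ 2) := by gcongr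
    _ = q * klFun (x / q) * (l - q) ^ 2 := by rw [hl]; ring

theorem mul_log_add_mul_mul_log_le_sum_mul_log {ι : Type*} [Fintype ι] {g : ι → ℝ} {q l : ℝ}
    (hq : 0 ≤ q) (hql : q ≤ l) (hg0 : ∀ i, 0 ≤ g i) (hgl : ∀ i, g i ≤ l)
    (hsum : ∑ i, g i = 1) (hlq : l + (Fintype.card ι - 1) * q = 1)
    (hsq : ∑ i, g i ^ 2 = l ^ 2 + (Fintype.card ι - 1) * q ^ 2) :
    l * log l + (Fintype.card ι - 1) * (q * log q) ≤ ∑ i, g i * log (g i) := by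
  have hdev : ∑ i, (g i - q) ^ 2 = (l - q) ^ 2 := by
    simp only [sub_sq, sum_add_distrib, sum_sub_distrib, ← sum_mul, ← mul_sum, sum_const,
      card_univ, nsmul_eq_mul, hsq, hsum]
    linear_combination (2 * q) * hlq
  rcases hq.eq_or_lt with rfl | hq
  · have hl : l = 1 := by simpa using hlq
    subst hl
    have hg : ∀ i, g i - g i ^ 2 = 0 := by
      have h0 : ∑ i, (g i - g i ^ 2) = 0 := by rw [sum_sub_distrib, hsum, hsq]; ring
      exact fun i ↦ (sum_eq_zero_iff_of_nonneg fun j _ ↦ by nlinarith [hg0 j, hgl j]).1 h0 i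
        (mem_univ i)
    have hmul_log : ∀ i, g i * log (g i) = 0 := fun i ↦ by
      rcases mul_eq_zero.1 (by linear_combination hg i : g i * (1 - g i) = 0) with h | h
      · simp [h]
      · simp [show g i = 1 by linarith]
    simp [hmul_log]
  rcases hql.eq_or_lt with rfl | hql
  · have hg : ∀ i, g i = q := fun i ↦ by
      have := (sum_eq_zero_iff_of_nonneg fun i _ ↦ sq_nonneg (g i - q)).1
        (by rw [hdev, sub_self, sq, zero_mul]) i (mem_univ i)
      linarith [pow_eq_zero_iff (n := 2) two_ne_zero |>.1 this]
    simp only [hg, sum_const, card_univ, nsmul_eq_mul]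
    exact le_of_eq (by ring)
  have hkl : q * klFun (l / q) * (l - q) ^ 2 ≤ (∑ i, q * klFun (g i / q)) * (l - q) ^ 2 :=
    calc q * klFun (l / q) * (l - q) ^ 2 = ∑ i, q * klFun (l / q) * (g i - q) ^ 2 := by
          rw [← mul_sum, hdev]
      _ ≤ ∑ i, q * klFun (g i / q) * (l - q) ^ 2 :=
          sum_le_sum fun i _ ↦ mul_klFun_div_mul_sq_le hq hql (hg0 i) (hgl i)
      _ = (∑ i, q * klFun (g i / q)) * (l - q) ^ 2 := by rw [sum_mul]
  have := le_of_mul_le_mul_right hkl (pow_pos (sub_pos.2 hql) 2)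
  simp only [mul_klFun_div hq (hg0 _), mul_klFun_div hq (hq.le.trans hql.le), sum_add_distrib,
    sum_sub_distrib, ← sum_mul, hsum, sum_const, card_univ, nsmul_eq_mul] at this
  linear_combination this + (log q + 1) * hlq

lemma card_mul_sq_le_of_sum_eq_zero {ι : Type*} [Fintype ι] {x : ι → ℝ} (hx : ∑ i, x i = 0)
    (i : ι) : Fintype.card ι * x i ^ 2 ≤ (Fintype.card ι - 1) * ∑ j, x j ^ 2 := by
  classical
  have hcs := sq_sum_le_card_mul_sum_sq (s := univ.erase i) (f := x)
  rw [← add_sum_erase _ _ (mem_univ i)] at hx ⊢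
  rw [card_erase_of_mem (mem_univ i), card_univ, Nat.cast_pred (Fintype.card_pos_iff.2 ⟨i⟩),
    show ∑ j ∈ univ.erase i, x j = -x i by linarith] at hcs
  linarith

/-- The largest entry of the vector `(l, q, …, q) ∈ ℝⁿ` with entry sum `1` and sum of squares
`P`. -/
noncomputable def purityTopEigenvalue (n P : ℝ) : ℝ := 1 / n + √((n - 1) / n * (P - 1 / n))

lemma le_purityTopEigenvalue {ι : Type*} [Fintype ι] {g : ι → ℝ} (hsum : ∑ i, g i = 1)
    (i : ι) : g i ≤ purityTopEigenvalue (Fintype.card ι) (∑ j, g j ^ 2) := by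
  set n : ℝ := (Fintype.card ι : ℝ)
  have hn : 0 < n := Nat.cast_pos.2 (Fintype.card_pos_iff.2 ⟨i⟩)
  have hmean : ∑ j, (g j - 1 / n) = 0 := by
    rw [sum_sub_distrib, hsum, sum_const, card_univ, nsmul_eq_mul]; field_simp; ring
  have hvar : ∑ j, (g j - 1 / n) ^ 2 = ∑ j, g j ^ 2 - 1 / n := by
    simp only [sub_sq, sum_add_distrib, sum_sub_distrib, ← mul_sum, ← sum_mul, sum_const,
      card_univ, nsmul_eq_mul, hsum]
    field_simp; ring
  have := card_mul_sq_le_of_sum_eq_zero hmean i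
  rw [hvar] at this
  have hsq : (g i - 1 / n) ^ 2 ≤ (n - 1) / n * (∑ j, g j ^ 2 - 1 / n) := by
    rw [div_mul_eq_mul_div, le_div_iff₀ hn]; linarith
  rw [purityTopEigenvalue]
  linarith [le_abs_self (g i - 1 / n), abs_le_sqrt hsq]

lemma purityTopEigenvalue_spec {n P l q : ℝ} (hn : 1 < n) (hP0 : 1 / n ≤ P) (hP1 : P ≤ 1)
    (hl : l = purityTopEigenvalue n P) (hq : q = (1 - l) / (n - 1)) :
    0 ≤ q ∧ q ≤ l ∧ l + (n - 1) * q = 1 ∧ P = l ^ 2 + (n - 1) * q ^ 2 := by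
  have hn0 : 0 < n := zero_lt_one.trans hn
  have hn1 : 0 < n - 1 := sub_pos.2 hn
  set σ := √((n - 1) / n * (P - 1 / n)) with hσ_def
  have hσ0 : 0 ≤ σ := sqrt_nonneg _
  have hσ : n ^ 2 * σ ^ 2 = (n - 1) * (n * P - 1) := by
    rw [hσ_def, sq_sqrt (mul_nonneg (div_nonneg hn1.le hn0.le) (sub_nonneg.2 hP0))]
    field_simp
  replace hl : l = 1 / n + σ := hl
  have hlq : l + (n - 1) * q = 1 := by
    rw [hq]; field_simp; ring
  have hsq : P = l ^ 2 + (n - 1) * q ^ 2 := by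
    rw [hq, hl]
    field_simp
    linear_combination (-n) * hσ
  have hl1 : l ≤ 1 := by nlinarith [sq_nonneg q]
  refine ⟨hq ▸ div_nonneg (sub_nonneg.2 hl1) hn1.le, ?_, hlq, hsq⟩
  rw [hq, div_le_iff₀ hn1]
  have : 1 / n * n = 1 := by field_simp
  nlinarith

theorem neg_sum_mul_logb_le_of_sum_sq {ι : Type*} [Fintype ι] {b : ℝ} (hb : 1 < b)
    {g : ι → ℝ} (hg0 : ∀ i, 0 ≤ g i) (hsum : ∑ i, g i = 1) {l : ℝ}
    (hl : l = purityTopEigenvalue (Fintype.card ι) (∑ i, g i ^ 2)) :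
    -∑ i, g i * logb b (g i) ≤
      -(l * logb b l) - (1 - l) * logb b ((1 - l) / (Fintype.card ι - 1)) := by
  set n : ℝ := (Fintype.card ι : ℝ)
  set P := ∑ i, g i ^ 2
  set q := (1 - l) / (n - 1)
  have hn : 1 ≤ n := by
    obtain ⟨i, -⟩ := nonempty_of_sum_ne_zero (hsum.trans_ne one_ne_zero)
    exact Nat.one_le_cast.2 (Fintype.card_pos_iff.2 ⟨i⟩)
  have hP0 : 1 / n ≤ P := by
    have := sq_sum_le_card_mul_sum_sq (s := univ) (f := g)
    rw [hsum, card_univ] at this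
    rw [div_le_iff₀ (zero_lt_one.trans_le hn)]
    linarith
  have hP1 : P ≤ 1 := by
    rw [← hsum]
    exact sum_le_sum fun i _ ↦ by
      nlinarith [hg0 i, single_le_sum (fun j _ ↦ hg0 j) (mem_univ i)]
  obtain ⟨hq0, hql, hlq, hsq⟩ :
      0 ≤ q ∧ q ≤ l ∧ l + (n - 1) * q = 1 ∧ P = l ^ 2 + (n - 1) * q ^ 2 := by
    rcases hn.eq_or_lt with hn_eq | hn_gt
    · have hl : l = 1 := by simp [hl, purityTopEigenvalue, ← hn_eq]
      have hP : P = 1 := le_antisymm hP1 (by simpa [← hn_eq] using hP0)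
      simp [q, hl, hP, ← hn_eq]
    · exact purityTopEigenvalue_spec hn_gt hP0 hP1 hl rfl
  have key := mul_log_add_mul_mul_log_le_sum_mul_log hq0 hql hg0
    (fun i ↦ hl ▸ le_purityTopEigenvalue hsum i) hsum hlq hsq
  have hlogb : 0 < log b := log_pos hb
  have hrhs : -(l * logb b l) - (1 - l) * logb b q
      = -(l * log l + (n - 1) * (q * log q)) / log b := by
    rw [show 1 - l = (n - 1) * q by linarith]; simp only [logb]; ring
  have hlhs : -∑ i, g i * logb b (g i) = -(∑ i, g i * log (g i)) / log b := by
    simp only [logb, neg_div, sum_div, mul_div_assoc]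
  rw [hrhs, hlhs]
  exact div_le_div_of_nonneg_right (neg_le_neg key) hlogb.le

lemma Matrix.IsHermitian.trace_mul_self {𝕜 n : Type*} [RCLike 𝕜] [Fintype n] [DecidableEq n]
    {A : Matrix n n 𝕜} (hA : A.IsHermitian) :
    (A * A).trace = ∑ i, (hA.eigenvalues i : 𝕜) ^ 2 := by
  conv_lhs => rw [hA.spectral_theorem, ← map_mul, Unitary.conjStarAlgAut_apply,
    Matrix.trace_mul_cycle, Unitary.coe_star_mul_self, one_mul, Matrix.diagonal_mul_diagonal,
    Matrix.trace_diagonal]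
  simp [sq]

/-- For a d-dimensional density matrix ρ with purity P = Tr(ρ²), the von
Neumann entropy satisfies S(ρ) ≤ -λ1 log λ1 - (1-λ1) log((1-λ1)/(d-1)) with
λ1 = 1/d + √((d-1)/d (P - 1/d)). -/
theorem stmt8 (d : ℕ) (ρ : Matrix (Fin d) (Fin d) ℂ) (hρ : ρ.PosSemidef)
    (htr : ρ.trace = 1) :
    let P : ℝ := purity ρ
    let l1 : ℝ := 1/(d:ℝ) + Real.sqrt (((d:ℝ)-1)/(d:ℝ) * (P - 1/(d:ℝ)))
    vnEntropy hρ.1 ≤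
      -(l1 * Real.logb 2 l1) - (1 - l1) * Real.logb 2 ((1 - l1)/((d:ℝ)-1)) := by
  intro P l1
  have hsum : ∑ i, hρ.1.eigenvalues i = 1 := by
    rw [hρ.1.trace_eq_sum_eigenvalues] at htr
    simpa using congrArg Complex.re htr
  have hP : P = ∑ i, hρ.1.eigenvalues i ^ 2 := by
    simp only [P, purity, hρ.1.trace_mul_self]
    norm_cast
  have := neg_sum_mul_logb_le_of_sum_sq one_lt_two hρ.eigenvalues_nonneg hsum
    (l := l1) (by rw [Fintype.card_fin, ← hP]; rfl)
  rwa [Fintype.card_fin] at this
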